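/- Let n ≥ 2, σ > 0, and on ℝ^n define the Gaussian densities p_i(x) = N(x; e_i, σ² I) for i = 1,…,n (where e_i are the standard basis vectors), the uniform mixture p_u = (1/n) ∑_{i=1}^n p_i, and the Bayes-composed unnormalized density g(x) := p_u(x) · ∏_{i=1}^n p_i(x)/p_u(x). Restricted to the diagonal x = (α, α, …, α), the function α ↦ g((α,…,α)) is proportional to exp(−(nα² − 2α + 1)/(2σ²)) and is uniquely maximized at α* = 1/n. -/

import Mathlib

open MeasureTheory Finset Real

noncomputable section

/-- The isotropic Gaussian density `N(x; μ, σ² I)` on `ℝ^n`. -/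
def gaussMean {n : ℕ} (σ : ℝ) (μ : Fin n → ℝ) (x : Fin n → ℝ) : ℝ :=
  (2 * π * σ ^ 2) ^ (-(n : ℝ) / 2) * Real.exp (-(∑ i, (x i - μ i) ^ 2) / (2 * σ ^ 2))

/-!
On the diagonal every component `p_i` takes the same value, since `‖(α,…,α) - e_i‖²` does not
depend on `i`. Hence the mixture `p_u` equals that common value, every factor `p_i / p_u` is `1`,
and `g = p_i` there. The exponent `nα² - 2α + 1 = n(α - 1/n)² + 1 - 1/n` is strictly minimized
at `α = 1/n`.
-/

theorem sum_sq_const_sub_single {ι : Type*} [Fintype ι] [DecidableEq ι] (i : ι) (α a : ℝ) :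
    ∑ j, (α - (Pi.single i a : ι → ℝ) j) ^ 2 =
      Fintype.card ι * α ^ 2 - 2 * α * a + a ^ 2 := by
  have hterm : ∀ j, (α - (Pi.single i a : ι → ℝ) j) ^ 2 =
      α ^ 2 + if j = i then a ^ 2 - 2 * α * a else 0 := by
    intro j
    rcases eq_or_ne j i with rfl | h
    · simp only [Pi.single_eq_same, if_true]; ring
    · simp [h]
  simp only [hterm, sum_add_distrib, sum_const, card_univ, nsmul_eq_mul, sum_ite_eq',
    mem_univ, if_true]
  ring

theorem gaussMean_single_one_const {n : ℕ} (σ : ℝ) (i : Fin n) (α : ℝ) :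
    gaussMean σ (Pi.single i 1) (fun _ => α) =
      (2 * π * σ ^ 2) ^ (-(n : ℝ) / 2) *
        Real.exp (-((n : ℝ) * α ^ 2 - 2 * α + 1) / (2 * σ ^ 2)) := by
  simp only [gaussMean, sum_sq_const_sub_single, Fintype.card_fin, mul_one, one_pow]

theorem bayesComposition_eq_of_forall_eq {ι : Type*} [Fintype ι] [Nonempty ι]
    {f : ι → ℝ} {v : ℝ} (hv : v ≠ 0) (hf : ∀ i, f i = v) :
    ((1 / (Fintype.card ι : ℝ)) * ∑ i, f i) * ∏ i, f i / ((1 / (Fintype.card ι : ℝ)) * ∑ i, f i)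
      = v := by
  have hmix : (1 / (Fintype.card ι : ℝ)) * ∑ i, f i = v := by
    simp only [hf, sum_const, card_univ, nsmul_eq_mul]
    field_simp
  rw [hmix]
  simp only [hf, div_self hv, prod_const_one, mul_one]

theorem quadratic_lt_of_ne_inv {n α : ℝ} (hn : 0 < n) (hα : α ≠ 1 / n) :
    n * (1 / n) ^ 2 - 2 * (1 / n) + 1 < n * α ^ 2 - 2 * α + 1 := by
  have hsq : 0 < n * (α - 1 / n) ^ 2 := by
    have := sub_ne_zero.2 hα
    positivity
  have hcomplete : n * α ^ 2 - 2 * α + 1 - (n * (1 / n) ^ 2 - 2 * (1 / n) + 1)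
      = n * (α - 1 / n) ^ 2 := by
    field_simp
    ring
  linarith

/-- **The Bayes composition fails to length-generalize.** With `p_i = N(e_i, σ² I)`,
`p_u = (1/n) ∑ i, p_i` and the Bayes-composed unnormalized density
`g(x) = p_u(x) ∏ i, p_i(x)/p_u(x)`, the restriction of `g` to the diagonal
`x = (α,…,α)` is proportional to `exp(−(nα² − 2α + 1)/(2σ²))` and uniquely maximized at
`α* = 1/n`. -/
theorem statement_17 (n : ℕ) (hn : 2 ≤ n) (σ : ℝ) (hσ : 0 < σ) :
    let p : Fin n → (Fin n → ℝ) → ℝ := fun i => gaussMean σ (Pi.single i 1)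
    let pu : (Fin n → ℝ) → ℝ := fun x => (1 / (n : ℝ)) * ∑ i, p i x
    let g : (Fin n → ℝ) → ℝ := fun x => pu x * ∏ i, p i x / pu x
    (∃ c : ℝ, 0 < c ∧ ∀ α : ℝ,
      g (fun _ => α) =
        c * Real.exp (-((n : ℝ) * α ^ 2 - 2 * α + 1) / (2 * σ ^ 2))) ∧
    (∀ α : ℝ, α ≠ 1 / (n : ℝ) → g (fun _ => α) < g (fun _ => 1 / (n : ℝ))) := by
  intro p pu g
  have : Nonempty (Fin n) := ⟨⟨0, by omega⟩⟩
  set c : ℝ := (2 * π * σ ^ 2) ^ (-(n : ℝ) / 2)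
  have hc : 0 < c := by positivity
  have hg : ∀ α : ℝ,
      g (fun _ => α) = c * Real.exp (-((n : ℝ) * α ^ 2 - 2 * α + 1) / (2 * σ ^ 2)) := by
    intro α
    simp only [g, pu, p]
    simpa only [Fintype.card_fin] using
      bayesComposition_eq_of_forall_eq (ι := Fin n) (by positivity)
        (gaussMean_single_one_const σ · α)
  refine ⟨⟨c, hc, hg⟩, fun α hα => ?_⟩
  rw [hg, hg]
  gcongr c * Real.exp (-?_ / _)
  exact quadratic_lt_of_ne_inv (by positivity) hα
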